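/- For every p ∈ [1,2] the entropy-type inequality E[V₀^p log(V₀^p) + V₁^p log(V₁^p)] ≤ E[V₀^p + V₁^p] · log(E[V₀^p + V₁^p]) holds (with the convention 0·log 0 = 0); moreover, equality holds at some point p ∈ [1,2] if and only if V₀V₁ = 0 almost surely. -/

import Mathlib

open MeasureTheory Real Set

/-!
Write `ψ x = x - x log x = x + negMulLog x`. Pointwise, the claim `f ≤ g - 1` for the integrands
`f = V^p log V^p + (1-V)^p log (1-V)^p` and `g = V^p + (1-V)^p` reads `ψ (V^p) + ψ ((1-V)^p) ≥ 1`.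
Since `ψ` is increasing on `[0, 1]` and `t^p ≥ t^2` there, it suffices to take `p = 2`, where
`log t < t - 1` gives `ψ (t^2) > t^2 + 2 t^2 (1 - t)`, and these lower bounds for `t = V` and
`t = 1 - V` add up to exactly `1`. Integrating, `E f ≤ c - 1 ≤ c log c` with `c = E g`.
Equality forces `f = g - 1` a.e., which is impossible where `0 < V < 1`; conversely, if `V ∈ {0, 1}`
a.e., both sides vanish at `p = 1`.
-/

lemma monotoneOn_self_add_negMulLog : MonotoneOn (fun x => x + negMulLog x) (Icc 0 1) := by
  rintro x ⟨hx0, -⟩ y ⟨hy0, hy1⟩ hxy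
  simp only [negMulLog]
  have hylog : (y - x) * log y ≤ 0 :=
    mul_nonpos_of_nonneg_of_nonpos (by linarith) (log_nonpos hy0 hy1)
  rcases hx0.eq_or_lt with rfl | hx
  · nlinarith [mul_log_nonpos hy0 hy1]
  have hratio : x * (log y - log x) ≤ y - x := by
    have hyx := log_le_sub_one_of_pos (div_pos (hx.trans_le hxy) hx)
    rw [log_div (by linarith) hx.ne'] at hyx
    calc x * (log y - log x) ≤ x * (y / x - 1) := mul_le_mul_of_nonneg_left hyx hx.le
      _ = y - x := by field_simp
  nlinarith

lemma one_lt_sq_add_negMulLog_sq_add {a b : ℝ} (ha : 0 < a) (hb : 0 < b) (hab : a + b = 1) :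
    1 < a ^ 2 + negMulLog (a ^ 2) + (b ^ 2 + negMulLog (b ^ 2)) := by
  have hlog {t s : ℝ} (ht : 0 < t) (hs : 0 < s) (hts : t + s = 1) :
      2 * t ^ 2 * s < negMulLog (t ^ 2) := by
    have := log_lt_sub_one_of_pos ht (by linarith)
    rw [negMulLog, log_pow]
    push_cast
    nlinarith [pow_pos ht 2]
  have h1 := hlog ha hb hab
  have h2 := hlog hb ha (by linarith)
  have hsum : a ^ 2 + 2 * a ^ 2 * b + (b ^ 2 + 2 * b ^ 2 * a) = 1 := by
    rw [← sub_eq_zero, show b = 1 - a by linarith]; ring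
  linarith

lemma one_lt_rpow_add_negMulLog_rpow_add {v p : ℝ} (hv : v ∈ Ioo 0 1) (hp : p ∈ Icc 0 2) :
    1 < v ^ p + negMulLog (v ^ p) + ((1 - v) ^ p + negMulLog ((1 - v) ^ p)) := by
  have hsq {t : ℝ} (ht : t ∈ Icc (0 : ℝ) 1) :
      t ^ 2 + negMulLog (t ^ 2) ≤ t ^ p + negMulLog (t ^ p) := by
    have hpow : t ^ (2 : ℝ) ≤ t ^ p := rpow_le_rpow_of_exponent_ge' ht.1 ht.2 hp.1 hp.2
    rw [rpow_two] at hpow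
    exact monotoneOn_self_add_negMulLog ⟨by positivity, pow_le_one₀ ht.1 ht.2⟩
      ⟨rpow_nonneg ht.1 p, rpow_le_one ht.1 ht.2 hp.1⟩ hpow
  have htwo := one_lt_sq_add_negMulLog_sq_add hv.1 (sub_pos.2 hv.2) (add_sub_cancel v 1)
  linarith [hsq (Ioo_subset_Icc_self hv), hsq (t := 1 - v) ⟨by linarith [hv.2], by linarith [hv.1]⟩]

lemma one_le_rpow_add_negMulLog_rpow_add {v p : ℝ} (hv : v ∈ Icc 0 1) (hp : p ∈ Icc 0 2) :
    1 ≤ v ^ p + negMulLog (v ^ p) + ((1 - v) ^ p + negMulLog ((1 - v) ^ p)) := by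
  have hnonneg {t : ℝ} (ht : t ∈ Icc (0 : ℝ) 1) : 0 ≤ t ^ p + negMulLog (t ^ p) :=
    add_nonneg (rpow_nonneg ht.1 p)
      (negMulLog_nonneg (rpow_nonneg ht.1 p) (rpow_le_one ht.1 ht.2 hp.1))
  rcases eq_endpoints_or_mem_Ioo_of_mem_Icc hv with rfl | rfl | hv'
  · simpa using hnonneg (t := 0) (by simp)
  · simpa using hnonneg (t := 0) (by simp)
  · exact (one_lt_rpow_add_negMulLog_rpow_add hv' hp).le

lemma Continuous.integrable_comp_of_ae_mem {X Ω : Type*} [TopologicalSpace X] [MeasurableSpace X]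
    [OpensMeasurableSpace X] [MeasurableSpace Ω] {μ : Measure Ω} [IsFiniteMeasure μ]
    {F : X → ℝ} (hF : Continuous F) {K : Set X} (hK : IsCompact K) {V : Ω → X}
    (hV : Measurable V) (hVK : ∀ᵐ ω ∂μ, V ω ∈ K) : Integrable (fun ω => F (V ω)) μ := by
  obtain ⟨C, hC⟩ := hK.exists_bound_of_continuousOn hF.continuousOn
  exact .of_bound (hF.measurable.comp hV).aestronglyMeasurable C (hVK.mono fun ω hω => hC _ hω)

section

variable {Ω : Type*} [MeasurableSpace Ω] {P : Measure Ω} {V : Ω → ℝ} {p : ℝ}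

lemma ae_mul_log_rpow_add_le (hrange : ∀ᵐ ω ∂P, V ω ∈ Icc 0 1) (hp : p ∈ Icc 0 2) :
    ∀ᵐ ω ∂P, V ω ^ p * log (V ω ^ p) + (1 - V ω) ^ p * log ((1 - V ω) ^ p)
      ≤ V ω ^ p + (1 - V ω) ^ p - 1 := by
  filter_upwards [hrange] with ω hω
  have := one_le_rpow_add_negMulLog_rpow_add hω hp
  simp only [negMulLog] at this
  linarith

section

variable [IsFiniteMeasure P]

lemma integrable_rpow_add_one_sub_rpow (hV : Measurable V) (hrange : ∀ᵐ ω ∂P, V ω ∈ Icc 0 1)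
    (hp : 0 ≤ p) : Integrable (fun ω => V ω ^ p + (1 - V ω) ^ p) P := by
  have hpow := continuous_rpow_const hp
  exact (hpow.add (hpow.comp (continuous_sub_left 1))).integrable_comp_of_ae_mem isCompact_Icc hV
    hrange

lemma integrable_mul_log_rpow_add (hV : Measurable V) (hrange : ∀ᵐ ω ∂P, V ω ∈ Icc 0 1)
    (hp : 0 ≤ p) :
    Integrable (fun ω => V ω ^ p * log (V ω ^ p) + (1 - V ω) ^ p * log ((1 - V ω) ^ p)) P := by
  have hpow := continuous_rpow_const hp
  exact (hpow.mul_log.add (hpow.comp (continuous_sub_left 1)).mul_log).integrable_comp_of_ae_mem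
    isCompact_Icc hV hrange

end

variable [IsProbabilityMeasure P]

lemma integral_rpow_add_one_sub_rpow_sub_one (hV : Measurable V)
    (hrange : ∀ᵐ ω ∂P, V ω ∈ Icc 0 1) (hp : 0 ≤ p) :
    ∫ ω, V ω ^ p + (1 - V ω) ^ p ∂P - 1 = ∫ ω, V ω ^ p + (1 - V ω) ^ p - 1 ∂P := by
  rw [integral_sub (integrable_rpow_add_one_sub_rpow hV hrange hp) (integrable_const 1)]
  simp

lemma integral_mul_log_rpow_add_le (hV : Measurable V) (hrange : ∀ᵐ ω ∂P, V ω ∈ Icc 0 1)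
    (hp : p ∈ Icc 0 2) :
    ∫ ω, V ω ^ p * log (V ω ^ p) + (1 - V ω) ^ p * log ((1 - V ω) ^ p) ∂P
      ≤ ∫ ω, V ω ^ p + (1 - V ω) ^ p ∂P - 1 := by
  rw [integral_rpow_add_one_sub_rpow_sub_one hV hrange hp.1]
  exact integral_mono_ae (integrable_mul_log_rpow_add hV hrange hp.1)
    ((integrable_rpow_add_one_sub_rpow hV hrange hp.1).sub (integrable_const 1))
    (ae_mul_log_rpow_add_le hrange hp)

lemma ae_mul_one_sub_eq_zero_of_integral_mul_log_rpow_add_eq (hV : Measurable V)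
    (hrange : ∀ᵐ ω ∂P, V ω ∈ Icc 0 1) (hp : p ∈ Icc 0 2)
    (heq : ∫ ω, V ω ^ p * log (V ω ^ p) + (1 - V ω) ^ p * log ((1 - V ω) ^ p) ∂P
      = ∫ ω, V ω ^ p + (1 - V ω) ^ p ∂P - 1) :
    ∀ᵐ ω ∂P, V ω * (1 - V ω) = 0 := by
  rw [integral_rpow_add_one_sub_rpow_sub_one hV hrange hp.1] at heq
  have hae := (integral_eq_iff_of_ae_le (integrable_mul_log_rpow_add hV hrange hp.1)
    ((integrable_rpow_add_one_sub_rpow hV hrange hp.1).sub (integrable_const 1))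
    (ae_mul_log_rpow_add_le hrange hp)).1 heq
  filter_upwards [hae, hrange] with ω hω hω01
  rcases eq_endpoints_or_mem_Ioo_of_mem_Icc hω01 with h | h | h
  · simp [h]
  · simp [h]
  · have := one_lt_rpow_add_negMulLog_rpow_add h hp
    simp only [negMulLog] at this
    simp only [Pi.sub_apply] at hω
    exact absurd hω (by linarith)

end

/-- **Proposition (entropy-type inequality for 2D random vectors).** For a random vector
`V = (V₀, V₁)` with `V₀, V₁ ≥ 0` and `V₀ + V₁ = 1` a.s. (here `V = V₀`, `V₁ = 1 - V₀`),
for every `p ∈ [1,2]`,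
`E[V₀^p log(V₀^p) + V₁^p log(V₁^p)] ≤ E[V₀^p + V₁^p] log(E[V₀^p + V₁^p])`
(with the convention `0·log 0 = 0`, automatic since `Real.log 0 = 0`); equality holds at
some `p ∈ [1,2]` if and only if `V₀ V₁ = 0` a.s. -/
theorem entropy_inequality
    {Ω : Type*} [MeasurableSpace Ω] (P : Measure Ω) [IsProbabilityMeasure P]
    (V : Ω → ℝ) (hVmeas : Measurable V)
    (hrange : ∀ᵐ ω ∂P, V ω ∈ Set.Icc (0 : ℝ) 1) :
    (∀ p ∈ Set.Icc (1 : ℝ) 2,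
      ∫ ω, ((V ω) ^ p * Real.log ((V ω) ^ p)
          + (1 - V ω) ^ p * Real.log ((1 - V ω) ^ p)) ∂P
        ≤ (∫ ω, (V ω) ^ p + (1 - V ω) ^ p ∂P) *
            Real.log (∫ ω, (V ω) ^ p + (1 - V ω) ^ p ∂P)) ∧
    ((∃ p ∈ Set.Icc (1 : ℝ) 2,
      ∫ ω, ((V ω) ^ p * Real.log ((V ω) ^ p)
          + (1 - V ω) ^ p * Real.log ((1 - V ω) ^ p)) ∂P
        = (∫ ω, (V ω) ^ p + (1 - V ω) ^ p ∂P) *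
            Real.log (∫ ω, (V ω) ^ p + (1 - V ω) ^ p ∂P)) ↔
      (∀ᵐ ω ∂P, V ω * (1 - V ω) = 0)) := by
  have hIcc {p : ℝ} (hp : p ∈ Icc (1 : ℝ) 2) : p ∈ Icc (0 : ℝ) 2 := ⟨by linarith [hp.1], hp.2⟩
  have hmass (p : ℝ) :
      ∫ ω, V ω ^ p + (1 - V ω) ^ p ∂P - 1
        ≤ (∫ ω, V ω ^ p + (1 - V ω) ^ p ∂P) * log (∫ ω, V ω ^ p + (1 - V ω) ^ p ∂P) := by
    refine self_sub_one_le_mul_log (integral_nonneg_of_ae ?_)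
    filter_upwards [hrange] with ω hω
    exact add_nonneg (rpow_nonneg hω.1 p) (rpow_nonneg (sub_nonneg.2 hω.2) p)
  refine ⟨fun p hp => (integral_mul_log_rpow_add_le hVmeas hrange (hIcc hp)).trans (hmass p),
    fun ⟨p, hp, heq⟩ => ?_, fun h => ⟨1, ⟨le_rfl, one_le_two⟩, ?_⟩⟩
  · refine ae_mul_one_sub_eq_zero_of_integral_mul_log_rpow_add_eq hVmeas hrange (hIcc hp) ?_
    exact le_antisymm (integral_mul_log_rpow_add_le hVmeas hrange (hIcc hp)) (heq ▸ hmass p)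
  · have hzero : ∫ ω, V ω * log (V ω) + (1 - V ω) * log (1 - V ω) ∂P = 0 := by
      refine integral_eq_zero_of_ae ?_
      filter_upwards [h] with ω hω
      rcases mul_eq_zero.1 hω with hV0 | hV1
      · simp [hV0]
      · simp [show V ω = 1 by linarith]
    simp [hzero]
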